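/- arXiv:1901.00677 — 3 statements merged into one kernel-verified Lean document; each statement's English description precedes it below -/
import Mathlib

section
/- Let $R$ be a nearest-neighbor random walk on $S = \{0,1,\dots\}^M$ with negative drift: there exists $\delta > 0$ with $s_i^+(n) - s_i^-(n) \le -\delta$ whenever $n_i > 0$. Fix, for each $i$, a constant $r_i$ with $1 < r_i$ and $r_i \cdot s_i^+(n) \le s_i^-(n) - \delta'$ for all $n$ with $n_i > 0$ and some $\delta' > 0$, and let $V(n) = v_0 + \sum_i v_i r_i^{n_i}$ with $v_0 \ge 1$, $v_i > 0$. Then there exist $\varepsilon > 0$, $b > 0$ and a finite set $B \subseteq S$ such that $\sum_u p_{n,u} V(n+u) - V(n) \le -\varepsilon V(n) + b \mathbf{1}_B(n)$ for all $n \in S$. -/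
/-- Total probability of transitions increasing coordinate `i` by one. -/
noncomputable def splus {M : ℕ} (P : (Fin M → ℕ) → (Fin M → ℕ) → ℝ) (i : Fin M)
    (n : Fin M → ℕ) : ℝ :=
  ∑' m, if (m i : ℤ) = (n i : ℤ) + 1 then P n m else 0

/-- Total probability of transitions decreasing coordinate `i` by one. -/
noncomputable def sminus {M : ℕ} (P : (Fin M → ℕ) → (Fin M → ℕ) → ℝ) (i : Fin M)
    (n : Fin M → ℕ) : ℝ :=
  ∑' m, if (m i : ℤ) = (n i : ℤ) - 1 then P n m else 0

theorem stmt11 {M : ℕ} (P : (Fin M → ℕ) → (Fin M → ℕ) → ℝ)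
    (hnn : ∀ n m, 0 ≤ P n m)
    (hnb : ∀ n m, P n m ≠ 0 → ∀ i, ((m i : ℤ) - (n i : ℤ)) ∈ ({-1, 0, 1} : Set ℤ))
    (hrow : ∀ n, ∑' m, P n m = 1)
    (δ : ℝ) (hδ : 0 < δ)
    (hdrift : ∀ (n : Fin M → ℕ) (i : Fin M), 0 < n i → splus P i n - sminus P i n ≤ -δ)
    (r : Fin M → ℝ) (hr : ∀ i, 1 < r i) (δ' : ℝ) (hδ' : 0 < δ')
    (hrdrift : ∀ (n : Fin M → ℕ) (i : Fin M), 0 < n i →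
      r i * splus P i n ≤ sminus P i n - δ')
    (v0 : ℝ) (hv0 : 1 ≤ v0) (v : Fin M → ℝ) (hv : ∀ i, 0 < v i)
    (V : (Fin M → ℕ) → ℝ) (hV : ∀ n, V n = v0 + ∑ i, v i * r i ^ (n i))
    (hsum : ∀ n, Summable (fun m => P n m * V m)) :
    ∃ ε : ℝ, 0 < ε ∧ ∃ b : ℝ, 0 < b ∧ ∃ B : Finset (Fin M → ℕ), ∀ n,
      (∑' m, P n m * V m) - V n ≤ -ε * V n + b * (if n ∈ B then (1 : ℝ) else 0) := by
  classical
  have hr0 : ∀ i, (0 : ℝ) < r i := fun i => lt_trans one_pos (hr i)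
  have hPsum : ∀ n, Summable (P n) := by
    intro n
    by_contra h
    have h1 := hrow n
    rw [tsum_eq_zero_of_not_summable h] at h1
    norm_num at h1
  rcases Nat.eq_zero_or_pos M with hM | hM
  · -- degenerate case M = 0
    subst hM
    refine ⟨1, one_pos, v0, by linarith, {fun i => 0}, ?_⟩
    intro n
    have hVn : ∀ m : Fin 0 → ℕ, V m = v0 := fun m => by simp [hV m]
    have hn : n = fun i => 0 := funext fun i => i.elim0
    have h2 : (∑' m, P n m * V m) = v0 := by
      simp only [hVn]
      rw [tsum_mul_right, hrow n, one_mul]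
    rw [h2, hVn n, hn]
    simp
  -- main case
  haveI : Nonempty (Fin M) := ⟨⟨0, hM⟩⟩
  set c : Fin M → ℝ := fun i => δ' * (r i - 1) / r i with hc
  have hcpos : ∀ i, 0 < c i := fun i => by
    have := hr i; have := hr0 i
    apply div_pos (by nlinarith) (hr0 i)
  set cm : ℝ := Finset.univ.inf' Finset.univ_nonempty c with hcm
  have hcmpos : 0 < cm := by
    rw [hcm, Finset.lt_inf'_iff]
    exact fun i _ => hcpos i
  have hcmle : ∀ i, cm ≤ c i := fun i =>
    Finset.inf'_le c (Finset.mem_univ i)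
  set C : ℝ := ∑ i, v i * (c i + (r i - 1)) with hC
  have hCpos : 0 < C := by
    apply Finset.sum_pos (fun i _ => ?_) Finset.univ_nonempty
    have := hr i
    exact mul_pos (hv i) (by nlinarith [hcpos i])
  set K : ℝ := 2 * v0 + 2 * C / cm with hK
  choose N hN using fun i => pow_unbounded_of_one_lt (K / v i) (hr i)
  refine ⟨cm / 2, by linarith, cm * v0 + C, by nlinarith,
    Fintype.piFinset fun i => Finset.range (N i), ?_⟩
  intro n
  have hP := hPsum n
  -- indicator functions
  set A : Fin M → (Fin M → ℕ) → ℝ :=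
    fun i m => if (m i : ℤ) = (n i : ℤ) + 1 then P n m else 0 with hA
  set D : Fin M → (Fin M → ℕ) → ℝ :=
    fun i m => if (m i : ℤ) = (n i : ℤ) - 1 then P n m else 0 with hD
  have hAsum : ∀ i, Summable (A i) := fun i => by
    apply Summable.of_nonneg_of_le (g := A i) (f := P n) ?_ ?_ hP
    · intro m; simp only [hA]; split <;> [exact hnn n m; exact le_rfl]
    · intro m; simp only [hA]; split <;> [exact le_rfl; exact hnn n m]
  have hDsum : ∀ i, Summable (D i) := fun i => by
    apply Summable.of_nonneg_of_le (g := D i) (f := P n) ?_ ?_ hP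
    · intro m; simp only [hD]; split <;> [exact hnn n m; exact le_rfl]
    · intro m; simp only [hD]; split <;> [exact le_rfl; exact hnn n m]
  have hspeq : ∀ i, splus P i n = ∑' m, A i m := fun i => rfl
  have hsmeq : ∀ i, sminus P i n = ∑' m, D i m := fun i => rfl
  have hsp_nonneg : ∀ i, 0 ≤ splus P i n := fun i => by
    rw [hspeq]
    apply tsum_nonneg
    intro m; simp only [hA]; split <;> [exact hnn n m; exact le_rfl]
  have hsp_le_one : ∀ i, splus P i n ≤ 1 := fun i => by
    rw [hspeq, ← hrow n]
    apply Summable.tsum_le_tsum _ (hAsum i) hP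
    intro m; simp only [hA]; split <;> [exact le_rfl; exact hnn n m]
  have hsm_zero : ∀ i, n i = 0 → sminus P i n = 0 := fun i hni => by
    rw [hsmeq]
    have : D i = fun _ => 0 := by
      funext m
      simp only [hD]
      rw [if_neg]
      omega
    rw [this, tsum_zero]
  -- pointwise decomposition
  have hpoint : ∀ i m, P n m * r i ^ (m i)
      = A i m * (r i ^ (n i) * r i) + D i m * (r i ^ (n i) / r i)
        + (P n m - A i m - D i m) * r i ^ (n i) := by
    intro i m
    by_cases hP0 : P n m = 0
    · simp [hA, hD, hP0]
    · have hmem := hnb n m hP0 i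
      simp only [Set.mem_insert_iff, Set.mem_singleton_iff] at hmem
      rcases hmem with h1 | h1 | h1
      · -- m i = n i - 1
        have hm : m i + 1 = n i := by omega
        have h2 : ¬((m i : ℤ) = (n i : ℤ) + 1) := by omega
        have h3 : (m i : ℤ) = (n i : ℤ) - 1 := by omega
        have hrpow : r i ^ (m i) = r i ^ (n i) / r i := by
          rw [eq_div_iff (ne_of_gt (hr0 i)), ← pow_succ, hm]
        simp only [hA, hD, if_neg h2, if_pos h3, hrpow]
        ring
      · have hm : m i = n i := by omega
        have h2 : ¬((m i : ℤ) = (n i : ℤ) + 1) := by omega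
        have h3 : ¬((m i : ℤ) = (n i : ℤ) - 1) := by omega
        simp only [hA, hD, if_neg h2, if_neg h3, hm]
        ring
      · have hm : m i = n i + 1 := by omega
        have h2 : (m i : ℤ) = (n i : ℤ) + 1 := by omega
        have h3 : ¬((m i : ℤ) = (n i : ℤ) - 1) := by omega
        simp only [hA, hD, if_pos h2, if_neg h3, hm, pow_succ]
        ring
  set S : Fin M → ℝ := fun i => ∑' m, P n m * r i ^ (m i) with hS
  have hVterm : ∀ (i : Fin M) (m : Fin M → ℕ), v i * r i ^ (m i) ≤ V m := by
    intro i m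
    rw [hV m]
    have h1 : v i * r i ^ m i ≤ ∑ j, v j * r j ^ m j :=
      Finset.single_le_sum (f := fun j => v j * r j ^ (m j))
        (fun j _ => mul_nonneg (hv j).le (pow_nonneg (hr0 j).le _))
        (Finset.mem_univ i)
    linarith
  have hSsum : ∀ i, Summable (fun m => P n m * r i ^ (m i)) := by
    intro i
    apply Summable.of_nonneg_of_le
      (f := fun m => (v i)⁻¹ * (P n m * V m))
      (fun m => mul_nonneg (hnn n m) (pow_nonneg (hr0 i).le _)) ?_
      ((hsum n).mul_left _)
    intro m
    show P n m * r i ^ (m i) ≤ (v i)⁻¹ * (P n m * V m)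
    have e : P n m * r i ^ (m i) = (v i)⁻¹ * (P n m * (v i * r i ^ (m i))) := by
      field_simp [(hv i).ne']
    rw [e]
    exact mul_le_mul_of_nonneg_left
      (mul_le_mul_of_nonneg_left (hVterm i m) (hnn n m)) (inv_nonneg.mpr (hv i).le)
  have hSeq : ∀ i, S i = splus P i n * (r i ^ (n i) * r i)
      + sminus P i n * (r i ^ (n i) / r i)
      + (1 - splus P i n - sminus P i n) * r i ^ (n i) := by
    intro i
    have e1 : S i = ∑' m, (A i m * (r i ^ (n i) * r i) + D i m * (r i ^ (n i) / r i)
        + (P n m - A i m - D i m) * r i ^ (n i)) := tsum_congr (hpoint i)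
    rw [e1, Summable.tsum_add (((hAsum i).mul_right _).add ((hDsum i).mul_right _))
        (((hP.sub (hAsum i)).sub (hDsum i)).mul_right _),
      Summable.tsum_add ((hAsum i).mul_right _) ((hDsum i).mul_right _),
      tsum_mul_right, tsum_mul_right, tsum_mul_right,
      Summable.tsum_sub (hP.sub (hAsum i)) (hDsum i), Summable.tsum_sub hP (hAsum i),
      hrow n, hspeq i, hsmeq i]
  -- per-coordinate drift bound
  have hTbound : ∀ i, S i - r i ^ (n i)
      ≤ -(c i) * r i ^ (n i) + (if n i = 0 then c i + (r i - 1) else 0) := by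
    intro i
    rcases Nat.eq_zero_or_pos (n i) with hni | hni
    · rw [if_pos hni, hSeq i, hni, hsm_zero i hni]
      have h1 := hsp_le_one i
      have h2 := hr i
      have h3 := hcpos i
      simp only [pow_zero]
      nlinarith
    · rw [if_neg hni.ne', add_zero]
      have hdr := hrdrift n i hni
      have hX : (0:ℝ) < r i ^ (n i) := pow_pos (hr0 i) _
      have hT : S i - r i ^ (n i)
          = (r i - 1) / r i * r i ^ (n i) * (r i * splus P i n - sminus P i n) := by
        rw [hSeq i]
        field_simp [(hr0 i).ne']
        ring
      rw [hT]
      have hF : 0 ≤ (r i - 1) / r i * r i ^ (n i) :=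
        mul_nonneg (div_nonneg (by linarith [hr i]) (hr0 i).le) (pow_pos (hr0 i) _).le
      calc (r i - 1) / r i * r i ^ (n i) * (r i * splus P i n - sminus P i n)
          ≤ (r i - 1) / r i * r i ^ (n i) * (-δ') :=
            mul_le_mul_of_nonneg_left (by linarith) hF
        _ = -(c i) * r i ^ (n i) := by
            rw [hc]; field_simp
  -- total expression
  have hLHS : (∑' m, P n m * V m) = v0 + ∑ i, v i * S i := by
    have e1 : (∑' m, P n m * V m)
        = ∑' m, (P n m * v0 + ∑ i, v i * (P n m * r i ^ (m i))) := by
      apply tsum_congr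
      intro m
      rw [hV m, mul_add, Finset.mul_sum]
      congr 1
      exact Finset.sum_congr rfl fun i _ => by ring
    rw [e1, Summable.tsum_add (hP.mul_right v0)
        (summable_sum fun i _ => ((hSsum i).mul_left (v i))),
      tsum_mul_right, hrow n, one_mul,
      Summable.tsum_finsetSum fun i _ => ((hSsum i).mul_left (v i))]
    congr 1
    exact Finset.sum_congr rfl fun i _ => tsum_mul_left
  have hVpos : 0 < V n := by
    rw [hV n]
    have : (0:ℝ) ≤ ∑ i, v i * r i ^ (n i) :=
      Finset.sum_nonneg fun i _ => mul_nonneg (hv i).le (pow_nonneg (hr0 i).le _)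
    linarith
  have hmain : (∑' m, P n m * V m) - V n ≤ -cm * V n + (cm * v0 + C) := by
    have e2 : (∑' m, P n m * V m) - V n = ∑ i, v i * (S i - r i ^ (n i)) := by
      rw [hLHS, hV n]
      rw [Finset.sum_congr rfl (fun i (_ : i ∈ Finset.univ) =>
        (mul_sub (v i) (S i) (r i ^ (n i))))]
      rw [Finset.sum_sub_distrib]
      ring
    rw [e2]
    have step1 : ∑ i, v i * (S i - r i ^ (n i))
        ≤ ∑ i, v i * (-(c i) * r i ^ (n i) + (if n i = 0 then c i + (r i - 1) else 0)) :=
      Finset.sum_le_sum fun i _ =>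
        mul_le_mul_of_nonneg_left (hTbound i) (hv i).le
    have step2 : ∑ i, v i * (-(c i) * r i ^ (n i) + (if n i = 0 then c i + (r i - 1) else 0))
        ≤ ∑ i, (-(cm) * (v i * r i ^ (n i)) + v i * (c i + (r i - 1))) := by
      apply Finset.sum_le_sum
      intro i _
      have hX : (0:ℝ) < r i ^ (n i) := pow_pos (hr0 i) _
      have h1 : v i * (-(c i) * r i ^ (n i)) ≤ -(cm) * (v i * r i ^ (n i)) := by
        nlinarith [mul_le_mul_of_nonneg_right (hcmle i) (mul_pos (hv i) hX).le]
      have h2 : v i * (if n i = 0 then c i + (r i - 1) else 0) ≤ v i * (c i + (r i - 1)) := by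
        apply mul_le_mul_of_nonneg_left _ (hv i).le
        split
        · exact le_rfl
        · have := hcpos i; have := hr i; nlinarith
      calc v i * (-(c i) * r i ^ (n i) + (if n i = 0 then c i + (r i - 1) else 0))
          = v i * (-(c i) * r i ^ (n i)) + v i * (if n i = 0 then c i + (r i - 1) else 0) := by
            ring
        _ ≤ -(cm) * (v i * r i ^ (n i)) + v i * (c i + (r i - 1)) := by
            linarith
    have step3 : ∑ i, (-(cm) * (v i * r i ^ (n i)) + v i * (c i + (r i - 1)))
        = -cm * (V n - v0) + C := by
      rw [Finset.sum_add_distrib, ← Finset.mul_sum, hV n, hC]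
      ring
    calc ∑ i, v i * (S i - r i ^ (n i)) ≤ _ := step1
      _ ≤ _ := step2
      _ = -cm * (V n - v0) + C := step3
      _ = -cm * V n + (cm * v0 + C) := by ring
  by_cases hB : n ∈ Fintype.piFinset fun i => Finset.range (N i)
  · rw [if_pos hB, mul_one]
    nlinarith
  · rw [if_neg hB, mul_zero, add_zero]
    -- find a large coordinate
    have : ∃ i, N i ≤ n i := by
      by_contra hcon
      push_neg at hcon
      exact hB (Fintype.mem_piFinset.mpr fun i => Finset.mem_range.mpr (hcon i))
    obtain ⟨i, hi⟩ := this
    have hVK : K ≤ V n := by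
      have h1 : v i * r i ^ (N i) ≤ v i * r i ^ (n i) :=
        mul_le_mul_of_nonneg_left (pow_le_pow_right₀ (hr i).le hi) (hv i).le
      have h2 : K < v i * r i ^ (N i) := by
        have := hN i
        rw [div_lt_iff₀ (hv i)] at this
        linarith [this]
      have h3 : v i * r i ^ (n i) ≤ V n := hVterm i n
      linarith
    have hKb : cm / 2 * K = cm * v0 + C := by
      rw [hK]; field_simp
    nlinarith [mul_le_mul_of_nonneg_left hVK (by linarith : (0:ℝ) ≤ cm / 2)]
end

section
/- Let $S$ be a countable state space, $P$ and $\bar P$ two Markov kernels on $S$, $F, \bar F : S \to [0,\infty)$, and let $\pi$ and $\bar\pi$ be stationary distributions of $P$ and $\bar P$ respectively. Define $F^t$ by $F^0 = 0$, $F^{t+1}(n) = F(n) + \sum_m P(n,m) F^t(m)$, and suppose $F^t(n)/t \to \mathcal{F} := \sum_n \pi(n) F(n)$ for all $n$, and $\bar{\mathcal{F}} := \sum_n \bar\pi(n) \bar F(n) < \infty$. If $G : S \to [0,\infty)$ satisfies, for all $n \in S$ and all $t \ge 0$, $\big| \bar F(n) - F(n) + \sum_m (\bar P(n,m) - P(n,m))(F^t(m)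 - F^t(n)) \big| \le G(n)$, then $|\bar{\mathcal{F}} - \mathcal{F}| \le \sum_n \bar\pi(n) G(n)$ (assuming the right-hand side and all sums converge absolutely). -/
/-!
Write `a t = ∑ₙ π̄(n) Fᵗ(n)`. Stationarity of `π̄` for `P̄` gives `a t = ∑ₙ π̄(n) (P̄ Fᵗ)(n)`, so
`a (t+1) - a t = ∑ₙ π̄(n) (F̄(n) - Δₜ(n))`, where `Δₜ(n)` is the quantity bounded by `G(n)`
(the rows of `P̄ - P` sum to `0`, so the bias terms `Fᵗ(m) - Fᵗ(n)` may replace `Fᵗ(m)`). Hence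
`t (𝓕̄ - Ḡ) ≤ a t ≤ t (𝓕̄ + Ḡ)` with `Ḡ = ∑ π̄ G`, and it remains to pass to the limit `Fᵗ/t → 𝓕`
under the sum. Fatou's lemma gives `𝓕 ≤ 𝓕̄ + Ḡ`. For `𝓕̄ ≤ 𝓕 + Ḡ`, the family `Fᵗ/t` is uniformly
`π̄`-integrable: on the support of `π̄` (closed under `P̄`) one has `Fᵗ ≤ ∑_{s<t} P̄ˢ (F̄ + G)`, and
truncating `F̄ + G` at a level `M` leaves a part of small `π̄`-mass, which `P̄` preserves.

The sums are taken in `ℝ≥0∞`, where they need no summability hypothesis: finiteness of `a t`, and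
with it summability of `P̄ Fᵗ` on the support of `π̄`, comes out of the induction.
-/

open scoped ENNReal
open Filter Topology

namespace MarkovReward

variable {S : Type*}

noncomputable def kernelApply (k : S → S → ℝ≥0∞) (f : S → ℝ≥0∞) (n : S) : ℝ≥0∞ :=
  ∑' m, k n m * f m

def IsStationary (p : S → ℝ≥0∞) (k : S → S → ℝ≥0∞) : Prop := ∀ m, ∑' n, p n * k n m = p m

variable {p : S → ℝ≥0∞} {k : S → S → ℝ≥0∞} {u : ℕ → S → ℝ≥0∞}

theorem tsum_mul_le_tsum_mul_of_le {f g : S → ℝ≥0∞} (hfg : ∀ n, p n ≠ 0 → f n ≤ g n) :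
    ∑' n, p n * f n ≤ ∑' n, p n * g n := by
  refine ENNReal.tsum_le_tsum fun n => ?_
  rcases eq_or_ne (p n) 0 with hn | hn
  · simp [hn]
  · exact mul_le_mul_right (hfg n hn) _

theorem tsum_mul_kernelApply (hp : IsStationary p k) (f : S → ℝ≥0∞) :
    ∑' n, p n * kernelApply k f n = ∑' n, p n * f n := by
  calc ∑' n, p n * kernelApply k f n = ∑' n, ∑' m, p n * k n m * f m := by
        simp only [kernelApply, ← ENNReal.tsum_mul_left, mul_assoc]
    _ = ∑' m, (∑' n, p n * k n m) * f m := by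
        rw [ENNReal.tsum_comm]; simp only [ENNReal.tsum_mul_right]
    _ = ∑' n, p n * f n := tsum_congr fun m => by rw [hp m]

theorem kernel_eq_zero_of_stationary (hp : IsStationary p k) {n m : S} (hn : p n ≠ 0)
    (hm : p m = 0) : k n m = 0 :=
  (mul_eq_zero.1 (ENNReal.tsum_eq_zero.1 ((hp m).trans hm) n)).resolve_left hn

theorem kernelApply_le_kernelApply_of_stationary (hp : IsStationary p k)
    {f g : S → ℝ≥0∞} {n : S} (hn : p n ≠ 0)
    (hfg : ∀ m, p m ≠ 0 → f m ≤ g m) : kernelApply k f n ≤ kernelApply k g n := by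
  refine ENNReal.tsum_le_tsum fun m => ?_
  rcases eq_or_ne (p m) 0 with hm | hm
  · simp [kernel_eq_zero_of_stationary hp hn hm]
  · exact mul_le_mul_right (hfg m hm) _

theorem kernelApply_ne_top_of_stationary (hp : IsStationary p k)
    {f : S → ℝ≥0∞} {n : S} (hn : p n ≠ 0)
    (hf : ∑' n, p n * f n ≠ ⊤) : kernelApply k f n ≠ ⊤ := by
  rw [← tsum_mul_kernelApply hp] at hf
  exact fun h => ENNReal.ne_top_of_tsum_ne_top hf n (ENNReal.mul_eq_top.2 (Or.inl ⟨hn, h⟩))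

theorem kernelApply_const_add_le {n : S} (hk : ∑' m, k n m ≤ 1)
    (c : ℝ≥0∞) (f : S → ℝ≥0∞) :
    kernelApply k (fun m => c + f m) n ≤ c + kernelApply k f n := by
  simp only [kernelApply, mul_add, ENNReal.tsum_add, ENNReal.tsum_mul_right]
  gcongr
  calc (∑' m, k n m) * c ≤ 1 * c := by gcongr
    _ = c := one_mul c

theorem tsum_mul_le_mul_of_le_add_kernelApply (hp : IsStationary p k) {h : S → ℝ≥0∞}
    (hh : ∑' n, p n * h n ≠ ⊤) (hu0 : ∀ n, u 0 n = 0)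
    (hstep : ∀ t n, p n ≠ 0 → kernelApply k (u t) n ≠ ⊤ →
      u (t + 1) n ≤ h n + kernelApply k (u t) n) (t : ℕ) :
    ∑' n, p n * u t n ≤ t * ∑' n, p n * h n := by
  induction t with
  | zero => simp [hu0]
  | succ t ih =>
    have hfin : ∑' n, p n * u t n ≠ ⊤ :=
      ne_top_of_le_ne_top (ENNReal.mul_ne_top (ENNReal.natCast_ne_top t) hh) ih
    calc ∑' n, p n * u (t + 1) n ≤ ∑' n, p n * (h n + kernelApply k (u t) n) :=
          tsum_mul_le_tsum_mul_of_le fun n hn =>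
            hstep t n hn (kernelApply_ne_top_of_stationary hp hn hfin)
      _ = ∑' n, p n * h n + ∑' n, p n * u t n := by
          simp only [mul_add, ENNReal.tsum_add, tsum_mul_kernelApply hp]
      _ ≤ ∑' n, p n * h n + t * ∑' n, p n * h n := by gcongr
      _ = (t + 1 : ℕ) * ∑' n, p n * h n := by push_cast; ring

theorem mul_tsum_le_tsum_mul_add_of_add_kernelApply_le (hp : IsStationary p k)
    {f g : S → ℝ≥0∞} (hstep : ∀ t n, p n ≠ 0 → f n + kernelApply k (u t) n ≤ u (t + 1) n + g n)
    (t : ℕ) : t * ∑' n, p n * f n ≤ ∑' n, p n * u t n + t * ∑' n, p n * g n := by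
  induction t with
  | zero => simp
  | succ t ih =>
    calc ((t + 1 : ℕ) : ℝ≥0∞) * ∑' n, p n * f n
        = ∑' n, p n * f n + t * ∑' n, p n * f n := by push_cast; ring
      _ ≤ ∑' n, p n * f n + (∑' n, p n * u t n + t * ∑' n, p n * g n) := by gcongr
      _ = ∑' n, p n * (f n + kernelApply k (u t) n) + t * ∑' n, p n * g n := by
          simp only [mul_add, ENNReal.tsum_add, tsum_mul_kernelApply hp, add_assoc]
      _ ≤ ∑' n, p n * (u (t + 1) n + g n) + t * ∑' n, p n * g n := by
          gcongr 1
          exact tsum_mul_le_tsum_mul_of_le (hstep t)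
      _ = ∑' n, p n * u (t + 1) n + (t + 1 : ℕ) * ∑' n, p n * g n := by
          simp only [mul_add, ENNReal.tsum_add]; push_cast; ring

/-- `∑_{s<t} kˢ h`: the reward `h` collected over `t` steps of the kernel `k`. -/
noncomputable def cumulativeReward (k : S → S → ℝ≥0∞) (h : S → ℝ≥0∞) (t : ℕ) : S → ℝ≥0∞ :=
  (fun f => h + kernelApply k f)^[t] 0

theorem cumulativeReward_succ (h : S → ℝ≥0∞) (t : ℕ) (n : S) :
    cumulativeReward k h (t + 1) n = h n + kernelApply k (cumulativeReward k h t) n := by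
  simp only [cumulativeReward, Function.iterate_succ_apply', Pi.add_apply]

theorem tsum_mul_cumulativeReward_le (hp : IsStationary p k) {h : S → ℝ≥0∞}
    (hh : ∑' n, p n * h n ≠ ⊤) (t : ℕ) :
    ∑' n, p n * cumulativeReward k h t n ≤ t * ∑' n, p n * h n :=
  tsum_mul_le_mul_of_le_add_kernelApply hp hh (fun _ => rfl)
    (fun t n _ _ => (cumulativeReward_succ h t n).le) t

theorem le_mul_add_cumulativeReward (hp : IsStationary p k) (hk : ∀ n, ∑' m, k n m ≤ 1)
    {h h₂ : S → ℝ≥0∞} {M : ℝ≥0∞} (hM : ∀ n, h n ≤ M + h₂ n) (hu0 : ∀ n, u 0 n = 0)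
    (hstep : ∀ t n, p n ≠ 0 → u (t + 1) n ≤ h n + kernelApply k (u t) n) (t : ℕ) :
    ∀ n, p n ≠ 0 → u t n ≤ t * M + cumulativeReward k h₂ t n := by
  induction t with
  | zero => simp [hu0]
  | succ t ih =>
    intro n hn
    calc u (t + 1) n ≤ h n + kernelApply k (u t) n := hstep t n hn
      _ ≤ M + h₂ n + kernelApply k (fun m => t * M + cumulativeReward k h₂ t m) n :=
          add_le_add (hM n) (kernelApply_le_kernelApply_of_stationary hp hn ih)
      _ ≤ M + h₂ n + (t * M + kernelApply k (cumulativeReward k h₂ t) n) := by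
          gcongr; exact kernelApply_const_add_le (hk n) _ _
      _ = (t + 1 : ℕ) * M + cumulativeReward k h₂ (t + 1) n := by
          rw [cumulativeReward_succ]; push_cast; ring

theorem exists_tsum_compl_mul_le (hp : IsStationary p k) (hk : ∀ n, ∑' m, k n m ≤ 1)
    {h : S → ℝ≥0∞} (hh_fin : ∀ n, h n ≠ ⊤) (hh : ∑' n, p n * h n ≠ ⊤) (hu0 : ∀ n, u 0 n = 0)
    (hstep : ∀ t n, p n ≠ 0 → u (t + 1) n ≤ h n + kernelApply k (u t) n)
    {δ : ℝ≥0∞} (hδ : 0 < δ) :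
    ∃ M ≠ ⊤, ∀ (t : ℕ) (A : Finset S),
      ∑' n : {n // n ∉ A}, p n * u t n ≤ t * (M * ∑' n : {n // n ∉ A}, p n + δ) := by
  obtain ⟨B, hB⟩ : ∃ B : Finset S, ∑' n : {n // n ∉ B}, p n * h n < δ :=
    ((ENNReal.tendsto_tsum_compl_atTop_zero hh).eventually (gt_mem_nhds hδ)).exists
  set h₂ : S → ℝ≥0∞ := (B : Set S)ᶜ.indicator h
  have hh₂ : ∀ n, h n ≤ B.sup h + h₂ n := by
    intro n
    by_cases hn : n ∈ B
    · exact (Finset.le_sup hn).trans le_self_add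
    · simp [h₂, hn]
  have hmass : ∀ t : ℕ, ∑' n, p n * cumulativeReward k h₂ t n ≤ t * δ := by
    refine fun t => (tsum_mul_cumulativeReward_le hp ?_ t).trans ?_
    · exact ne_top_of_le_ne_top hh
        (tsum_mul_le_tsum_mul_of_le fun n _ => Set.indicator_le_self _ _ n)
    · simp only [h₂, ← Set.indicator_mul_right, ← tsum_subtype]
      gcongr
      exact hB.le
  refine ⟨B.sup h, ((Finset.sup_lt_iff (by simp)).2 fun n _ => (hh_fin n).lt_top).ne,
    fun t A => ?_⟩
  calc ∑' n : {n // n ∉ A}, p n * u t n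
      ≤ ∑' n : {n // n ∉ A}, p n * (t * B.sup h + cumulativeReward k h₂ t n) :=
        tsum_mul_le_tsum_mul_of_le fun n hn =>
          le_mul_add_cumulativeReward hp hk hh₂ hu0 hstep t n hn
    _ = t * B.sup h * ∑' n : {n // n ∉ A}, p n +
          ∑' n : {n // n ∉ A}, p n * cumulativeReward k h₂ t n := by
        simp only [mul_add, ENNReal.tsum_add, ENNReal.tsum_mul_right, mul_comm]
    _ ≤ t * B.sup h * ∑' n : {n // n ∉ A}, p n + t * δ := by
        gcongr
        exact (ENNReal.tsum_comp_le_tsum_of_injective Subtype.val_injective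
          (fun n => p n * cumulativeReward k h₂ t n)).trans (hmass t)
    _ = t * (B.sup h * ∑' n : {n // n ∉ A}, p n + δ) := by ring

theorem tendsto_sum_mul_div (hp_fin : ∀ n, p n ≠ ⊤) {L : ℝ≥0∞}
    (hconv : ∀ n, Tendsto (fun t : ℕ => u t n / t) atTop (𝓝 L)) (A : Finset S) :
    Tendsto (fun t : ℕ => (∑ n ∈ A, p n * u t n) / t) atTop (𝓝 ((∑ n ∈ A, p n) * L)) := by
  have := tendsto_finsetSum A fun n _ => ENNReal.Tendsto.const_mul (hconv n) (Or.inr (hp_fin n))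
  simpa only [div_eq_mul_inv, Finset.sum_mul, mul_assoc] using this

theorem le_of_tsum_mul_le_mul (hp1 : ∑' n, p n = 1) {L H : ℝ≥0∞}
    (hconv : ∀ n, Tendsto (fun t : ℕ => u t n / t) atTop (𝓝 L))
    (hu : ∀ t : ℕ, ∑' n, p n * u t n ≤ t * H) : L ≤ H := by
  have hp_fin : ∀ n, p n ≠ ⊤ := ENNReal.ne_top_of_tsum_ne_top (hp1 ▸ ENNReal.one_ne_top)
  calc L = ∑' n, p n * L := by rw [ENNReal.tsum_mul_right, hp1, one_mul]
    _ ≤ H := by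
      refine ENNReal.summable.tsum_le_of_sum_le fun A => ?_
      rw [← Finset.sum_mul]
      refine le_of_tendsto' (tendsto_sum_mul_div hp_fin hconv A) fun t => ?_
      exact ENNReal.div_le_of_le_mul
        ((ENNReal.sum_le_tsum A).trans ((hu t).trans_eq (mul_comm _ _)))

theorem le_add_of_mul_le_tsum_mul_add (hp1 : ∑' n, p n = 1) {L F G : ℝ≥0∞}
    (hconv : ∀ n, Tendsto (fun t : ℕ => u t n / t) atTop (𝓝 L))
    (hu : ∀ t : ℕ, t * F ≤ ∑' n, p n * u t n + t * G)
    (htail : ∀ δ : ℝ≥0∞, 0 < δ → ∃ M ≠ ⊤, ∀ (t : ℕ) (A : Finset S),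
      ∑' n : {n // n ∉ A}, p n * u t n ≤ t * (M * ∑' n : {n // n ∉ A}, p n + δ)) :
    F ≤ L + G := by
  have hp_fin : ∀ n, p n ≠ ⊤ := ENNReal.ne_top_of_tsum_ne_top (hp1 ▸ ENNReal.one_ne_top)
  refine ENNReal.le_of_forall_pos_le_add fun ε hε _ => ?_
  obtain ⟨M, hM, hM_tail⟩ := htail ε (ENNReal.coe_pos.2 hε)
  set q : Finset S → ℝ≥0∞ := fun A => ∑' n : {n // n ∉ A}, p n
  have hA : ∀ A : Finset S, F ≤ (∑ n ∈ A, p n) * L + (M * q A + ε + G) := by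
    intro A
    refine ge_of_tendsto ((tendsto_sum_mul_div hp_fin hconv A).add_const _) ?_
    filter_upwards [eventually_ge_atTop 1] with t ht
    have ht0 : (t : ℝ≥0∞) ≠ 0 := by exact_mod_cast (by omega : t ≠ 0)
    have htop : (t : ℝ≥0∞) ≠ ⊤ := ENNReal.natCast_ne_top t
    have hFt : F * t ≤ ∑ n ∈ A, p n * u t n + (M * q A + ε + G) * t :=
      calc F * t ≤ ∑' n, p n * u t n + t * G := (mul_comm F t).trans_le (hu t)
        _ = ∑ n ∈ A, p n * u t n + ∑' n : {n // n ∉ A}, p n * u t n + t * G := by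
            rw [← ENNReal.sum_add_tsum_compl A (fun n => p n * u t n)]; rfl
        _ ≤ ∑ n ∈ A, p n * u t n + t * (M * q A + ε) + t * G := by gcongr; exact hM_tail t A
        _ = ∑ n ∈ A, p n * u t n + (M * q A + ε + G) * t := by ring
    calc F = F * t / t := (ENNReal.mul_div_cancel_right ht0 htop).symm
      _ ≤ (∑ n ∈ A, p n * u t n + (M * q A + ε + G) * t) / t := by gcongr
      _ = (∑ n ∈ A, p n * u t n) / t + (M * q A + ε + G) := by
          rw [ENNReal.add_div, ENNReal.mul_div_cancel_right ht0 htop]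
  have hq : Tendsto (fun A => L + (M * q A + ε + G)) atTop (𝓝 (L + (M * 0 + ε + G))) :=
    tendsto_const_nhds.add (((ENNReal.Tendsto.const_mul
      (ENNReal.tendsto_tsum_compl_atTop_zero (hp1 ▸ ENNReal.one_ne_top)) (Or.inr hM)).add_const
        _).add_const _)
  calc F ≤ L + (M * 0 + ε + G) := ge_of_tendsto' hq fun A => (hA A).trans (by
        gcongr
        calc (∑ n ∈ A, p n) * L ≤ (∑' n, p n) * L := by gcongr; exact ENNReal.sum_le_tsum A
          _ = L := by rw [hp1, one_mul])
    _ = L + G + ε := by ring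

theorem limit_bounds_of_step_bounds (hp1 : ∑' n, p n = 1) (hp : IsStationary p k)
    (hk : ∀ n, ∑' m, k n m ≤ 1) {f g : S → ℝ≥0∞} (hf_fin : ∀ n, f n ≠ ⊤) (hg_fin : ∀ n, g n ≠ ⊤)
    (hf : ∑' n, p n * f n ≠ ⊤) (hg : ∑' n, p n * g n ≠ ⊤) (hu0 : ∀ n, u 0 n = 0) {L : ℝ≥0∞}
    (hconv : ∀ n, Tendsto (fun t : ℕ => u t n / t) atTop (𝓝 L))
    (hstep : ∀ t n, p n ≠ 0 → kernelApply k (u t) n ≠ ⊤ →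
      u (t + 1) n ≤ f n + g n + kernelApply k (u t) n ∧
      f n + kernelApply k (u t) n ≤ u (t + 1) n + g n) :
    L ≤ ∑' n, p n * f n + ∑' n, p n * g n ∧ ∑' n, p n * f n ≤ L + ∑' n, p n * g n := by
  have hfg : ∑' n, p n * (f n + g n) = ∑' n, p n * f n + ∑' n, p n * g n := by
    simp only [mul_add, ENNReal.tsum_add]
  have hfg_fin : ∑' n, p n * (f n + g n) ≠ ⊤ := hfg ▸ ENNReal.add_ne_top.2 ⟨hf, hg⟩
  have hupper := tsum_mul_le_mul_of_le_add_kernelApply hp hfg_fin hu0 fun t n hn hK =>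
    (hstep t n hn hK).1
  have hK : ∀ t n, p n ≠ 0 → kernelApply k (u t) n ≠ ⊤ := fun t n hn =>
    kernelApply_ne_top_of_stationary hp hn
      (ne_top_of_le_ne_top (ENNReal.mul_ne_top (ENNReal.natCast_ne_top t) hfg_fin) (hupper t))
  refine ⟨le_of_tsum_mul_le_mul hp1 hconv fun t => (hupper t).trans_eq (by rw [hfg]), ?_⟩
  refine le_add_of_mul_le_tsum_mul_add hp1 hconv
    (mul_tsum_le_tsum_mul_add_of_add_kernelApply_le hp fun t n hn => (hstep t n hn (hK t n hn)).2)
    fun δ hδ => exists_tsum_compl_mul_le hp hk (fun n => ENNReal.add_ne_top.2 ⟨hf_fin n, hg_fin n⟩)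
      hfg_fin hu0 (fun t n hn => (hstep t n hn (hK t n hn)).1) hδ

theorem hasSum_of_tsum_eq_of_ne_zero {f : S → ℝ} {a : ℝ} (h : ∑' n, f n = a) (ha : a ≠ 0) :
    HasSum f a :=
  h ▸ (by_contra fun hf => ha (h ▸ tsum_eq_zero_of_not_summable hf) : Summable f).hasSum

theorem hasSum_of_tsum_ofReal_ne_top {a : S → ℝ} (ha : ∀ m, 0 ≤ a m)
    (h : ∑' m, ENNReal.ofReal (a m) ≠ ⊤) : HasSum a (∑' m, ENNReal.ofReal (a m)).toReal := by
  simpa [ENNReal.toReal_ofReal (ha _), ENNReal.tsum_toReal_eq] using ENNReal.hasSum_toReal h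

theorem tsum_ofReal_mul_ofReal {a b : S → ℝ} (ha : ∀ n, 0 ≤ a n) (hb : ∀ n, 0 ≤ b n)
    (hab : Summable fun n => a n * b n) :
    ∑' n, ENNReal.ofReal (a n) * ENNReal.ofReal (b n) = ENNReal.ofReal (∑' n, a n * b n) := by
  rw [ENNReal.ofReal_tsum_of_nonneg (fun n => mul_nonneg (ha n) (hb n)) hab]
  exact tsum_congr fun n => (ENNReal.ofReal_mul (ha n)).symm

theorem tendsto_ofReal_div_natCast {x : ℕ → ℝ} {L : ℝ}
    (h : Tendsto (fun t : ℕ => x t / t) atTop (𝓝 L)) :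
    Tendsto (fun t : ℕ => ENNReal.ofReal (x t) / t) atTop (𝓝 (ENNReal.ofReal L)) := by
  refine (ENNReal.tendsto_ofReal h).congr' ?_
  filter_upwards [eventually_ge_atTop 1] with t ht
  rw [ENNReal.ofReal_div_of_pos (by exact_mod_cast ht), ENNReal.ofReal_natCast]

theorem hasSum_mul_of_hasSum_mul_sub {d f : S → ℝ} {c s : ℝ} (hd : HasSum d 0)
    (h : HasSum (fun m => d m * (f m - c)) s) : HasSum (fun m => d m * f m) s := by
  simpa [mul_sub] using h.add (hd.mul_right c)

theorem abs_add_sub_le_of_bias_le {p pb f : S → ℝ} {c y a b g Q : ℝ} (hp : HasSum p 1)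
    (hpb : HasSum pb 1) (hy : y = a + ∑' m, p m * f m)
    (hbias : Summable fun m => (pb m - p m) * (f m - c))
    (hg : |b - a + ∑' m, (pb m - p m) * (f m - c)| ≤ g)
    (hQ : HasSum (fun m => pb m * f m) Q) : |b + Q - y| ≤ g := by
  set X := ∑' m, (pb m - p m) * (f m - c)
  have hX : HasSum (fun m => (pb m - p m) * f m) X :=
    hasSum_mul_of_hasSum_mul_sub (by simpa using hpb.sub hp) hbias.hasSum
  have hpf : HasSum (fun m => p m * f m) (Q - X) := by
    simpa only [← sub_mul, sub_sub_cancel] using hQ.sub hX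
  rw [hy, hpf.tsum_eq]
  convert hg using 2
  ring

theorem ofReal_bounds_of_abs_add_sub_le {pb f : S → ℝ} {a y g : ℝ} (hpb : ∀ m, 0 ≤ pb m)
    (hf : ∀ m, 0 ≤ f m) (ha : 0 ≤ a)
    (h : ∀ Q, HasSum (fun m => pb m * f m) Q → |a + Q - y| ≤ g)
    (hK : ∑' m, ENNReal.ofReal (pb m) * ENNReal.ofReal (f m) ≠ ⊤) :
    ENNReal.ofReal y ≤ ENNReal.ofReal a + ENNReal.ofReal g +
        ∑' m, ENNReal.ofReal (pb m) * ENNReal.ofReal (f m) ∧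
      ENNReal.ofReal a + ∑' m, ENNReal.ofReal (pb m) * ENNReal.ofReal (f m) ≤
        ENNReal.ofReal y + ENNReal.ofReal g := by
  simp only [← ENNReal.ofReal_mul (hpb _)] at hK ⊢
  set Q := (∑' m, ENNReal.ofReal (pb m * f m)).toReal
  have hQ := hasSum_of_tsum_ofReal_ne_top (fun m => mul_nonneg (hpb m) (hf m)) hK
  rw [← ENNReal.ofReal_toReal hK]
  obtain ⟨hlo, hhi⟩ := abs_le.1 (h Q hQ)
  constructor
  · calc ENNReal.ofReal y ≤ ENNReal.ofReal (a + g + Q) := ENNReal.ofReal_le_ofReal (by linarith)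
      _ ≤ ENNReal.ofReal a + ENNReal.ofReal g + ENNReal.ofReal Q :=
          ENNReal.ofReal_add_le.trans (by gcongr; exact ENNReal.ofReal_add_le)
  · calc ENNReal.ofReal a + ENNReal.ofReal Q = ENNReal.ofReal (a + Q) :=
          (ENNReal.ofReal_add ha ENNReal.toReal_nonneg).symm
      _ ≤ ENNReal.ofReal (y + g) := ENNReal.ofReal_le_ofReal (by linarith)
      _ ≤ ENNReal.ofReal y + ENNReal.ofReal g := ENNReal.ofReal_add_le

theorem tsum_ofReal_eq_one {f : S → ℝ} (hf : ∀ n, 0 ≤ f n) (h : HasSum f 1) :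
    ∑' n, ENNReal.ofReal (f n) = 1 := by
  rw [← ENNReal.ofReal_tsum_of_nonneg hf h.summable, h.tsum_eq, ENNReal.ofReal_one]

theorem isStationary_ofReal {π : S → ℝ} {P : S → S → ℝ} (hπ : ∀ n, 0 ≤ π n) (hπ1 : HasSum π 1)
    (hP : ∀ n m, 0 ≤ P n m) (hP1 : ∀ n, HasSum (P n) 1) (hπP : ∀ n, ∑' m, π m * P m n = π n) :
    IsStationary (fun n => ENNReal.ofReal (π n)) (fun n m => ENNReal.ofReal (P n m)) := fun m => by
  rw [tsum_ofReal_mul_ofReal hπ (fun n => hP n m), hπP]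
  exact hπ1.summable.of_nonneg_of_le (fun n => mul_nonneg (hπ n) (hP n m))
    fun n => mul_le_of_le_one_right (hπ n) (le_hasSum (hP1 n) m fun j _ => hP n j)

theorem abs_sub_le_of_ofReal_le_add {a b c : ℝ} (ha : 0 ≤ a) (hb : 0 ≤ b) (hc : 0 ≤ c)
    (hab : ENNReal.ofReal a ≤ ENNReal.ofReal b + ENNReal.ofReal c)
    (hba : ENNReal.ofReal b ≤ ENNReal.ofReal a + ENNReal.ofReal c) : |a - b| ≤ c := by
  rw [← ENNReal.ofReal_add hb hc, ENNReal.ofReal_le_ofReal_iff (add_nonneg hb hc)] at hab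
  rw [← ENNReal.ofReal_add ha hc, ENNReal.ofReal_le_ofReal_iff (add_nonneg ha hc)] at hba
  exact abs_sub_le_iff.2 ⟨by linarith, by linarith⟩

theorem nonneg_of_reward_recursion {P : S → S → ℝ} {F : S → ℝ} {Ft : ℕ → S → ℝ}
    (hP : ∀ n m, 0 ≤ P n m) (hF : ∀ n, 0 ≤ F n) (hFt0 : ∀ n, Ft 0 n = 0)
    (hFtS : ∀ t n, Ft (t + 1) n = F n + ∑' m, P n m * Ft t m) (t : ℕ) (n : S) : 0 ≤ Ft t n := by
  induction t generalizing n with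
  | zero => exact (hFt0 n).ge
  | succ t ih =>
    exact (hFtS t n).symm ▸ add_nonneg (hF n) (tsum_nonneg fun m => mul_nonneg (hP n m) (ih m))

end MarkovReward

open MarkovReward

theorem stmt13_general {S : Type*}
    (P Pb : S → S → ℝ) (F Fb G : S → ℝ) (π πb : S → ℝ)
    (hPnn : ∀ n m, 0 ≤ P n m) (hProw : ∀ n, ∑' m, P n m = 1)
    (hPbnn : ∀ n m, 0 ≤ Pb n m) (hPbrow : ∀ n, ∑' m, Pb n m = 1)
    (hπnn : ∀ n, 0 ≤ π n)
    (hπbnn : ∀ n, 0 ≤ πb n) (hπbsum : ∑' n, πb n = 1)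
    (hπbstat : ∀ n, ∑' m, πb m * Pb m n = πb n)
    (hFnn : ∀ n, 0 ≤ F n) (hFbnn : ∀ n, 0 ≤ Fb n)
    (Ft : ℕ → S → ℝ)
    (hFt0 : ∀ n, Ft 0 n = 0)
    (hFtS : ∀ t n, Ft (t + 1) n = F n + ∑' m, P n m * Ft t m)
    (hconv : ∀ n, Filter.Tendsto (fun t : ℕ => Ft t n / t) Filter.atTop
      (nhds (∑' n, π n * F n)))
    (hFbfin : Summable (fun n => πb n * Fb n))
    (hGfin : Summable (fun n => πb n * G n))
    (hbias : ∀ t n, Summable (fun m => (Pb n m - P n m) * (Ft t m - Ft t n)))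
    (hG : ∀ (n : S) (t : ℕ),
      |Fb n - F n + ∑' m, (Pb n m - P n m) * (Ft t m - Ft t n)| ≤ G n) :
    |(∑' n, πb n * Fb n) - ∑' n, π n * F n| ≤ ∑' n, πb n * G n := by
  have hP : ∀ n, HasSum (P n) 1 := fun n => hasSum_of_tsum_eq_of_ne_zero (hProw n) one_ne_zero
  have hPb : ∀ n, HasSum (Pb n) 1 := fun n => hasSum_of_tsum_eq_of_ne_zero (hPbrow n) one_ne_zero
  have hπb : HasSum πb 1 := hasSum_of_tsum_eq_of_ne_zero hπbsum one_ne_zero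
  have hFtnn := nonneg_of_reward_recursion hPnn hFnn hFt0 hFtS
  have hGnn : ∀ n, 0 ≤ G n := fun n => (abs_nonneg _).trans (hG n 0)
  have hFb_eq := tsum_ofReal_mul_ofReal hπbnn hFbnn hFbfin
  have hG_eq := tsum_ofReal_mul_ofReal hπbnn hGnn hGfin
  obtain ⟨hle, hge⟩ := limit_bounds_of_step_bounds (tsum_ofReal_eq_one hπbnn hπb)
    (isStationary_ofReal hπbnn hπb hPbnn hPb hπbstat)
    (fun n => (tsum_ofReal_eq_one (hPbnn n) (hPb n)).le)
    (fun _ => ENNReal.ofReal_ne_top) (fun _ => ENNReal.ofReal_ne_top)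
    (hFb_eq ▸ ENNReal.ofReal_ne_top) (hG_eq ▸ ENNReal.ofReal_ne_top)
    (fun n => by simp [hFt0]) (fun n => tendsto_ofReal_div_natCast (hconv n))
    fun t n _ hK => ofReal_bounds_of_abs_add_sub_le (hPbnn n) (hFtnn t) (hFbnn n)
      (fun _ hQ => abs_add_sub_le_of_bias_le (hP n) (hPb n) (hFtS t n) (hbias t n) (hG n t) hQ) hK
  rw [hFb_eq, hG_eq] at hle hge
  exact abs_sub_le_of_ofReal_le_add (tsum_nonneg fun n => mul_nonneg (hπbnn n) (hFbnn n))
    (tsum_nonneg fun n => mul_nonneg (hπnn n) (hFnn n))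
    (tsum_nonneg fun n => mul_nonneg (hπbnn n) (hGnn n)) hge hle

theorem stmt13 {S : Type*} [Countable S]
    (P Pb : S → S → ℝ) (F Fb G : S → ℝ) (π πb : S → ℝ)
    (hPnn : ∀ n m, 0 ≤ P n m) (hProw : ∀ n, ∑' m, P n m = 1)
    (hPbnn : ∀ n m, 0 ≤ Pb n m) (hPbrow : ∀ n, ∑' m, Pb n m = 1)
    (hπnn : ∀ n, 0 ≤ π n) (hπsum : ∑' n, π n = 1)
    (hπstat : ∀ n, ∑' m, π m * P m n = π n)
    (hπbnn : ∀ n, 0 ≤ πb n) (hπbsum : ∑' n, πb n = 1)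
    (hπbstat : ∀ n, ∑' m, πb m * Pb m n = πb n)
    (hFnn : ∀ n, 0 ≤ F n) (hFbnn : ∀ n, 0 ≤ Fb n) (hGnn : ∀ n, 0 ≤ G n)
    (Ft : ℕ → S → ℝ)
    (hFt0 : ∀ n, Ft 0 n = 0)
    (hFtS : ∀ t n, Ft (t + 1) n = F n + ∑' m, P n m * Ft t m)
    (hconv : ∀ n, Filter.Tendsto (fun t : ℕ => Ft t n / t) Filter.atTop
      (nhds (∑' n, π n * F n)))
    (hFbfin : Summable (fun n => πb n * Fb n))
    (hGfin : Summable (fun n => πb n * G n))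
    (hbias : ∀ t n, Summable (fun m => (Pb n m - P n m) * (Ft t m - Ft t n)))
    (hG : ∀ (n : S) (t : ℕ),
      |Fb n - F n + ∑' m, (Pb n m - P n m) * (Ft t m - Ft t n)| ≤ G n) :
    |(∑' n, πb n * Fb n) - ∑' n, π n * F n| ≤ ∑' n, πb n * G n :=
  stmt13_general P Pb F Fb G π πb hPnn hProw hPbnn hPbrow hπnn hπbnn hπbsum hπbstat hFnn hFbnn Ft
    hFt0 hFtS hconv hFbfin hGfin hbias hG
end

section
/- Let $S$ be countable, $P$ a Markov kernel on $S$, $F : S \to [0,\infty)$, and suppose there exist functions $A, B : S \times S \to [0,\infty)$ and nonnegative constants $\phi(n, u, d, v)$ such that for all $t \ge 0$ the bias terms $D^t(n, n+u) = F^t(n+u) - F^t(n)$ satisfy the recursion $D^{t+1}(n, n+u) = F(n+u) - F(n) + \sum_{d, v} \phi(n,u,d,v) D^t(n+d, n+d+v)$ (finitely many nonzero terms). If for all $n, u$: $F(n+u) - F(n) + \sum_{d,v} \phi(n,u,d,v) B(n+d, v) \le B(n, u)$ and $F(n) - F(n+u) + \sum_{d,v} \phi(n,u,d,v) A(n+d,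 v) \le A(n, u)$, then $-A(n,u) \le D^t(n, n+u) \le B(n,u)$ for all $t \ge 0$, $n$, and $u$. -/
theorem stmt18 {S : Type*} [Countable S] [AddCommMonoid S]
    (P : S → S → ℝ) (F : S → ℝ)
    (hPnn : ∀ n m, 0 ≤ P n m) (hProw : ∀ n, ∑' m, P n m = 1)
    (hFnn : ∀ n, 0 ≤ F n)
    (Ft : ℕ → S → ℝ)
    (hFt0 : ∀ n, Ft 0 n = 0)
    (hFtS : ∀ t n, Ft (t + 1) n = F n + ∑' m, P n m * Ft t m)
    (D : ℕ → S → S → ℝ)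
    (hD : ∀ t n u, D t n u = Ft t (n + u) - Ft t n)
    (A B : S → S → ℝ) (hAnn : ∀ n u, 0 ≤ A n u) (hBnn : ∀ n u, 0 ≤ B n u)
    (φ : S → S → S → S → ℝ) (hφnn : ∀ n u d v, 0 ≤ φ n u d v)
    (U : Finset (S × S))
    (hrec : ∀ t n u, D (t + 1) n u =
      F (n + u) - F n + ∑ p ∈ U, φ n u p.1 p.2 * D t (n + p.1) p.2)
    (hBineq : ∀ n u,
      F (n + u) - F n + ∑ p ∈ U, φ n u p.1 p.2 * B (n + p.1) p.2 ≤ B n u)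
    (hAineq : ∀ n u,
      F n - F (n + u) + ∑ p ∈ U, φ n u p.1 p.2 * A (n + p.1) p.2 ≤ A n u) :
    ∀ (t : ℕ) (n u : S), -A n u ≤ D t n u ∧ D t n u ≤ B n u := by
  intro t
  induction t with
  | zero =>
    intro n u
    have h0 : D 0 n u = 0 := by rw [hD, hFt0, hFt0]; ring
    rw [h0]
    exact ⟨neg_nonpos.mpr (hAnn n u), hBnn n u⟩
  | succ t ih =>
    intro n u
    rw [hrec]
    constructor
    · have h := hAineq n u
      have hsum : ∑ p ∈ U, φ n u p.1 p.2 * (-A (n + p.1) p.2) ≤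
          ∑ p ∈ U, φ n u p.1 p.2 * D t (n + p.1) p.2 :=
        Finset.sum_le_sum fun p _ =>
          mul_le_mul_of_nonneg_left (ih (n + p.1) p.2).1 (hφnn n u p.1 p.2)
      have : ∑ p ∈ U, φ n u p.1 p.2 * (-A (n + p.1) p.2) =
          -∑ p ∈ U, φ n u p.1 p.2 * A (n + p.1) p.2 := by
        rw [← Finset.sum_neg_distrib]; congr 1; ext p; ring
      linarith
    · have h := hBineq n u
      have hsum : ∑ p ∈ U, φ n u p.1 p.2 * D t (n + p.1) p.2 ≤
          ∑ p ∈ U, φ n u p.1 p.2 * B (n + p.1) p.2 :=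
        Finset.sum_le_sum fun p _ =>
          mul_le_mul_of_nonneg_left (ih (n + p.1) p.2).2 (hφnn n u p.1 p.2)
      linarith
end
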